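/- arXiv:0904.3137 — 2 statements merged into one kernel-verified Lean document; each statement's English description precedes it below -/
import Mathlib

section
/- In a closed category C, the morphism i_{C(1,X)} : C(1,X) → C(1, C(1,X)) equals C(1, i_X), i.e. the component of the natural isomorphism i at the internal hom C(1,X) agrees with the functor C(1,-) applied to i_X. -/
open CategoryTheory Opposite

universe v u

/-- The data of a closed category in the sense of Eilenberg–Kelly / Street / Laplaza:
an internal hom functor, a unit object, and the transformations `i`, `j`, `L`. -/
structure ClosedStruct (C : Type u) [Category.{v} C] where
  ihom : Cᵒᵖ × C ⥤ C
  unit : C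
  i : ∀ X : C, X ≅ ihom.obj (op unit, X)
  j : ∀ X : C, unit ⟶ ihom.obj (op X, X)
  L : ∀ X Y Z : C,
    ihom.obj (op Y, Z) ⟶ ihom.obj (op (ihom.obj (op X, Y)), ihom.obj (op X, Z))

namespace ClosedStruct

variable {C : Type u} [Category.{v} C] (S : ClosedStruct C)

/-- Internal hom object. -/
def h (X Y : C) : C := S.ihom.obj (op X, Y)

/-- Covariant action `C(1,g)` of the internal hom functor. -/
def mapR (X : C) {Y Z : C} (g : Y ⟶ Z) : S.h X Y ⟶ S.h X Z :=
  S.ihom.map (𝟙 (op X), g)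

/-- Contravariant action `C(f,1)` of the internal hom functor. -/
def mapL {X Y : C} (f : X ⟶ Y) (Z : C) : S.h Y Z ⟶ S.h X Z :=
  S.ihom.map (f.op, 𝟙 Z)

/-- The map `γ : C(X,Y) → C(1, C(X,Y))`, `f ↦ j_X ≫ C(1,f)`. -/
def gamma {X Y : C} (f : X ⟶ Y) : S.unit ⟶ S.h X Y := S.j X ≫ S.mapR X f

end ClosedStruct

/-- The axioms making a `ClosedStruct` into a closed category:
naturality/dinaturality of `i`, `j`, `L` and the axioms CC1–CC5
(CC5 : `γ` is a bijection). -/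
structure IsClosedCat {C : Type u} [Category.{v} C] (S : ClosedStruct C) : Prop where
  i_nat : ∀ {X Y : C} (f : X ⟶ Y),
    f ≫ (S.i Y).hom = (S.i X).hom ≫ S.mapR S.unit f
  j_dinat : ∀ {X Y : C} (f : X ⟶ Y),
    S.j X ≫ S.mapR X f = S.j Y ≫ S.mapL f Y
  L_nat : ∀ (X : C) {Y Y' Z Z' : C} (f : Y' ⟶ Y) (g : Z ⟶ Z'),
    S.ihom.map (f.op, g) ≫ S.L X Y' Z'
      = S.L X Y Z ≫ S.ihom.map (((S.mapR X f).op, S.mapR X g) :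
        (op (S.ihom.obj (op X, Y)), S.ihom.obj (op X, Z)) ⟶ (op (S.ihom.obj (op X, Y')), S.ihom.obj (op X, Z')))
  L_dinat : ∀ {X X' : C} (f : X ⟶ X') (Y Z : C),
    S.L X Y Z ≫ S.mapL (S.mapL f Y) (S.h X Z)
      = S.L X' Y Z ≫ S.mapR (S.h X' Y) (S.mapL f Z)
  cc1 : ∀ X Y : C, S.j Y ≫ S.L X Y Y = S.j (S.h X Y)
  cc2 : ∀ X Y : C, S.L X X Y ≫ S.mapL (S.j X) (S.h X Y) = (S.i (S.h X Y)).hom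
  cc3 : ∀ X Y U V : C,
    S.L Y U V ≫ S.mapR (S.h Y U) (S.L X Y V)
      = S.L X U V ≫ S.L (S.h X Y) (S.h X U) (S.h X V)
          ≫ S.mapL (S.L X Y U) (S.h (S.h X Y) (S.h X V))
  cc4 : ∀ Y Z : C,
    S.L S.unit Y Z ≫ S.mapL (S.i Y).hom (S.h S.unit Z) = S.mapR Y (S.i Z).hom
  cc5 : ∀ X Y : C, Function.Bijective (fun f : X ⟶ Y => S.gamma f)

/-- In a closed category `C`, the component of the natural isomorphism `i`
at the internal hom `C(1,X)` agrees with `C(1,-)` applied to `i_X`: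
`i_{C(1,X)} = C(1, i_X)`. -/
theorem i_hom_unit_eq_mapR_i {C : Type u} [Category.{v} C]
    (S : ClosedStruct C) (hS : IsClosedCat S) (X : C) :
    (S.i (S.h S.unit X)).hom = S.mapR S.unit (S.i X).hom :=
  (cancel_epi (S.i X).hom).mp (hS.i_nat (S.i X).hom)
end

section
/- Let C be a multicategory such that for each pair of objects X, Z there exist an object C̲(X;Z) and a morphism ev_{X;Z} : X, C̲(X;Z) → Z for which the induced map φ_{X;Y₁,…,Yₙ;Z} : C(Y₁,…,Yₙ; C̲(X;Z)) → C(X,Y₁,…,Yₙ; Z), f ↦ (1_X, f)·ev_{X;Z}, is a bijection for all finite sequences (Yᵢ). Then C is a closed multicategory: for every m ≥ 0 and objects X₁,…,Xₘ,Z there exist C̲(X₁,…,Xₘ;Z) and an evaluation ev_{X₁,…,Xₘ;Z} making the analogous map φ bijective for all (Yⱼ). -/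
universe u v

/-- A family of multimorphisms `f_i : Xss_i → Ys_i` (with matching lengths),
used to express simultaneous composition in a multicategory. -/
inductive HomFam (Obj : Type u) (Hom : List Obj → Obj → Type v) :
    List (List Obj) → List Obj → Type (max u v)
  | nil : HomFam Obj Hom [] []
  | cons {Xs Y Xss Ys} : Hom Xs Y → HomFam Obj Hom Xss Ys →
      HomFam Obj Hom (Xs :: Xss) (Y :: Ys)

/-- A family of families of multimorphisms. -/
inductive FamFam (Obj : Type u) (Hom : List Obj → Obj → Type v) :
    List (List (List Obj)) → List (List Obj) → Type (max u v)
  | nil : FamFam Obj Hom [] []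
  | cons {Xss Ys Xsss Yss} : HomFam Obj Hom Xss Ys → FamFam Obj Hom Xsss Yss →
      FamFam Obj Hom (Xss :: Xsss) (Ys :: Yss)

variable {Obj : Type u} {Hom : List Obj → Obj → Type v}

/-- The family of identities on a list of objects. -/
def idFam (ident : ∀ X, Hom [X] X) : ∀ Ys : List Obj,
    HomFam Obj Hom (Ys.map fun y => [y]) Ys
  | [] => .nil
  | y :: ys => .cons (ident y) (idFam ident ys)

/-- Concatenation of families. -/
def appendFam : ∀ {A B C D}, HomFam Obj Hom A B → HomFam Obj Hom C D →
    HomFam Obj Hom (A ++ C) (B ++ D)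
  | _, _, _, _, .nil, t => t
  | _, _, _, _, .cons f fs, t => .cons f (appendFam fs t)

/-- Flattening a family of families. -/
def flattenFam : ∀ {Xsss Yss}, FamFam Obj Hom Xsss Yss →
    HomFam Obj Hom Xsss.flatten Yss.flatten
  | _, _, .nil => .nil
  | _, _, .cons fs fss => appendFam fs (flattenFam fss)

/-- Componentwise composition of a family of families with a family. -/
def zipComp
    (comp : ∀ {Xss Ys Z}, HomFam Obj Hom Xss Ys → Hom Ys Z → Hom Xss.flatten Z) :
    ∀ {Xsss Yss Zs}, FamFam Obj Hom Xsss Yss → HomFam Obj Hom Yss Zs →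
      HomFam Obj Hom (Xsss.map List.flatten) Zs
  | _, _, _, .nil, .nil => .nil
  | _, _, _, .cons fs fss, .cons g gs => .cons (comp fs g) (zipComp comp fss gs)

/-- A multicategory: objects, multimorphisms `X₁,…,Xₙ → Y`, identities and an
associative and unital simultaneous composition `(f₁,…,fₙ) · g`. -/
structure Multicategory : Type (max (u + 1) (v + 1)) where
  Obj : Type u
  Hom : List Obj → Obj → Type v
  ident : ∀ X : Obj, Hom [X] X
  comp : ∀ {Xss : List (List Obj)} {Ys : List Obj} {Z : Obj},
    HomFam Obj Hom Xss Ys → Hom Ys Z → Hom Xss.flatten Z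
  id_comp : ∀ {Ys Z} (g : Hom Ys Z), HEq (comp (idFam ident Ys) g) g
  comp_id : ∀ {Xs Y} (f : Hom Xs Y), HEq (comp (.cons f .nil) (ident Y)) f
  assoc : ∀ {Xsss Yss Zs Z} (fss : FamFam Obj Hom Xsss Yss)
    (gs : HomFam Obj Hom Yss Zs) (h : Hom Zs Z),
    HEq (comp (zipComp (fun fs g => comp fs g) fss gs) h)
        (comp (flattenFam fss) (comp gs h))

namespace Multicategory

variable (M : Multicategory.{u, v})

theorem map_singleton_flatten (l : List M.Obj) :
    (l.map fun x => [x]).flatten = l := by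
  induction l <;> simp_all

theorem sflat (Xs Ys : List M.Obj) :
    ((Xs.map fun x => [x]) ++ [Ys]).flatten = Xs ++ Ys := by
  induction Xs <;> simp_all

theorem sflat2 (Xs Γ : List M.Obj) :
    (Xs :: (Γ.map fun x => [x])).flatten = Xs ++ Γ := by
  simp [List.flatten_cons, map_singleton_flatten]

/-- `(1,…,1,f) · g` : plugging `f` into the last argument of `g`. -/
def plug {Xs Ys : List M.Obj} {H Z : M.Obj} (f : M.Hom Ys H)
    (g : M.Hom (Xs ++ [H]) Z) : M.Hom (Xs ++ Ys) Z :=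
  cast (congrArg (M.Hom · Z) (M.sflat Xs Ys))
    (M.comp (appendFam (idFam M.ident Xs) (.cons f .nil)) g)

/-- `(f,1,…,1) · g` : plugging `f` into the first argument of `g`. -/
def plugFirst {Xs Γ : List M.Obj} {Y Z : M.Obj} (f : M.Hom Xs Y)
    (g : M.Hom (Y :: Γ) Z) : M.Hom (Xs ++ Γ) Z :=
  cast (congrArg (M.Hom · Z) (M.sflat2 Xs Γ))
    (M.comp (.cons f (idFam M.ident Γ)) g)

/-- `(f) · h` : composing a multimorphism with a unary morphism. -/
def postcomp {Γ : List M.Obj} {Y Z : M.Obj} (f : M.Hom Γ Y) (h : M.Hom [Y] Z) :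
    M.Hom Γ Z :=
  cast (congrArg (M.Hom · Z) (by simp : ([Γ].flatten : List M.Obj) = Γ))
    (M.comp (.cons f .nil) h)

/-- Composition in the underlying category. -/
def comp1 {X Y Z : M.Obj} (f : M.Hom [X] Y) (g : M.Hom [Y] Z) : M.Hom [X] Z :=
  M.postcomp f g

/-- `(a, b) · g` : binary simultaneous composition. -/
def pair {As Bs : List M.Obj} {A' B' Cc : M.Obj} (a : M.Hom As A') (b : M.Hom Bs B')
    (g : M.Hom [A', B'] Cc) : M.Hom (As ++ Bs) Cc :=
  cast (congrArg (M.Hom · Cc) (by simp : ([As, Bs].flatten : List M.Obj) = As ++ Bs))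
    (M.comp (.cons a (.cons b .nil)) g)

/-- `(f₁,…,fₘ,1) · g` for a family of unary morphisms `fᵢ`. -/
def sideComp {As Bs : List M.Obj} (fs : HomFam M.Obj M.Hom (As.map fun a => [a]) Bs)
    {H Z : M.Obj} (g : M.Hom (Bs ++ [H]) Z) : M.Hom (As ++ [H]) Z :=
  cast (congrArg (M.Hom · Z) (M.sflat As [H]))
    (M.comp (appendFam fs (.cons (M.ident H) .nil)) g)

end Multicategory

/-- The image of a family of multimorphisms under a multifunctor. -/
def mapFam {M N : Multicategory.{u, v}} (obj : M.Obj → N.Obj)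
    (map : ∀ {Xs Y}, M.Hom Xs Y → N.Hom (Xs.map obj) (obj Y)) :
    ∀ {Xss Ys}, HomFam M.Obj M.Hom Xss Ys →
      HomFam N.Obj N.Hom (Xss.map (List.map obj)) (Ys.map obj)
  | _, _, .nil => .nil
  | _, _, .cons f fs => .cons (map f) (mapFam obj @map fs)

/-- A multifunctor between multicategories. -/
structure Multifunctor (M N : Multicategory.{u, v}) : Type (max u v) where
  obj : M.Obj → N.Obj
  map : ∀ {Xs Y}, M.Hom Xs Y → N.Hom (Xs.map obj) (obj Y)
  map_ident : ∀ X, map (M.ident X) = N.ident (obj X)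
  map_comp : ∀ {Xss Ys Z} (fs : HomFam M.Obj M.Hom Xss Ys) (g : M.Hom Ys Z),
    HEq (map (M.comp fs g)) (N.comp (mapFam obj @map fs) (map g))

/-- A closed multicategory : a multicategory together with internal hom objects
and evaluation morphisms such that `φ : f ↦ (1,…,1,f)·ev` is a bijection. -/
structure ClosedMulticategory extends Multicategory.{u, v} where
  ihom : List Obj → Obj → Obj
  ev : ∀ (Xs : List Obj) (Z : Obj), Hom (Xs ++ [ihom Xs Z]) Z
  closed : ∀ (Xs Ys : List Obj) (Z : Obj),
    Function.Bijective
      (fun f : Hom Ys (ihom Xs Z) => toMulticategory.plug f (ev Xs Z))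

namespace ClosedMulticategory

variable (C : ClosedMulticategory.{u, v})

/-- The inverse of the bijection `φ` : currying. -/
noncomputable def curry {Xs Ys : List C.Obj} {Z : C.Obj}
    (f : C.Hom (Xs ++ Ys) Z) : C.Hom Ys (C.ihom Xs Z) :=
  (Equiv.ofBijective _ (C.closed Xs Ys Z)).symm f

/-- The covariant action `C̲(W₁,…,Wₘ; h)` of a unary morphism `h` on internal
homs, defined by `(1,…,1,C̲(Ws;h)) · ev_{Ws;B} = ev_{Ws;A} · h`. -/
noncomputable def homCovM (Ws : List C.Obj) {A B : C.Obj} (h : C.Hom [A] B) :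
    C.Hom [C.ihom Ws A] (C.ihom Ws B) :=
  C.curry (Xs := Ws) (C.toMulticategory.postcomp (C.ev Ws A) h)

/-- The contravariant action `C̲(h; Z)` of a unary morphism `h : A → B` on
internal homs, defined by `(1,C̲(h;Z)) · ev_{A;Z} = (h,1) · ev_{B;Z}`. -/
noncomputable def homContra {A B : C.Obj} (h : C.Hom [A] B) (Z : C.Obj) :
    C.Hom [C.ihom [B] Z] (C.ihom [A] Z) :=
  C.curry (Xs := [A]) (C.toMulticategory.plugFirst h (C.ev [B] Z))

/-- The contravariant action `C̲(f₁,…,fₘ; Z)` of a family of unary morphisms on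
internal homs. -/
noncomputable def homContraM {As Bs : List C.Obj}
    (fs : HomFam C.Obj C.Hom (As.map fun a => [a]) Bs) (Z : C.Obj) :
    C.Hom [C.ihom Bs Z] (C.ihom As Z) :=
  C.curry (Xs := As) (C.toMulticategory.sideComp fs (C.ev Bs Z))

/-- Composition `μ` of the `C`-category `C̲`, determined by
`(1_X, μ)·ev_{X;Z} = (ev_{X;Y},1)·ev_{Y;Z}`. -/
noncomputable def mu (X Y Z : C.Obj) :
    C.Hom [C.ihom [X] Y, C.ihom [Y] Z] (C.ihom [X] Z) :=
  C.curry (Xs := [X])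
    (C.toMulticategory.plugFirst (Xs := [X, C.ihom [X] Y]) (Γ := [C.ihom [Y] Z])
      (C.ev [X] Y) (C.ev [Y] Z))

/-- The identity `⟨1_X⟩ : () → C̲(X;X)` of the `C`-category `C̲`. -/
noncomputable def oneHom (X : C.Obj) : C.Hom [] (C.ihom [X] X) :=
  C.curry (Xs := [X]) (Ys := []) (C.ident X)

/-- The morphism `L^X_{YZ} : C̲(Y;Z) → C̲(C̲(X;Y);C̲(X;Z))`, uniquely determined
by `(1, L^X_{YZ}) · ev = μ`. -/
noncomputable def Lhat (X Y Z : C.Obj) :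
    C.Hom [C.ihom [Y] Z] (C.ihom [C.ihom [X] Y] (C.ihom [X] Z)) :=
  C.curry (Xs := [C.ihom [X] Y]) (C.mu X Y Z)

/-- The action `C̲(u;1) : C̲(1;X) → C̲(;X) = X` of a nullary morphism `u`. -/
def uAct {one : C.Obj} (u : C.Hom [] one) (X : C.Obj) :
    C.Hom [C.ihom [one] X] X :=
  C.toMulticategory.plugFirst u (C.ev [one] X)

/-- `(one, u)` is a unit object of the closed multicategory `C` if all the
morphisms `C̲(u;1) : C̲(1;X) → X` are invertible. -/
def IsUnitObj (one : C.Obj) (u : C.Hom [] one) : Prop :=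
  ∀ X : C.Obj, ∃ inv : C.Hom [X] (C.ihom [one] X),
    C.toMulticategory.comp1 (C.uAct u X) inv = C.ident (C.ihom [one] X) ∧
    C.toMulticategory.comp1 inv (C.uAct u X) = C.ident X

end ClosedMulticategory

/-- The closing transformation `F̲_{Xs;Z} : F C̲(Xs;Z) → D̲(F Xs; FZ)` of a
multifunctor between closed multicategories, i.e. the unique morphism with
`(1,…,1,F̲) · ev^D = F(ev^C)`. -/
noncomputable def closingTrans {C D : ClosedMulticategory.{u, v}}
    (F : Multifunctor C.toMulticategory D.toMulticategory)
    (Xs : List C.Obj) (Z : C.Obj) :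
    D.Hom [F.obj (C.ihom Xs Z)] (D.ihom (Xs.map F.obj) (F.obj Z)) :=
  D.curry (Xs := Xs.map F.obj)
    (cast (congrArg (D.Hom · (F.obj Z)) (List.map_append : List.map F.obj (Xs ++ [C.ihom Xs Z]) = _))
      (F.map (C.ev Xs Z)))

/-!
Take `C̲(X₁,…,Xₘ;Z) := C̲(Xₘ; C̲(X₁,…,Xₘ₋₁;Z))` with evaluation `(1,…,1,ev_{Xₘ}) · ev_{X₁,…,Xₘ₋₁}`.
By associativity, the map `φ` of this evaluation is the composite
`C(Ys; C̲(Xₘ;H)) → C(Xₘ,Ys; H) → C(X₁,…,Xₘ,Ys; Z)` of the two maps `φ` given by induction on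
`m`, hence a bijection; for `m = 0` take `C̲(;Z) := Z` with `ev := 1_Z`.
-/

theorem HomFam.cons_heq_cons {Xs Xs' : List Obj} {Y Y' : Obj} {Xss Xss' : List (List Obj)}
    {Ys Ys' : List Obj} (hXs : Xs = Xs') (hY : Y = Y') (hXss : Xss = Xss') (hYs : Ys = Ys')
    {f : Hom Xs Y} {f' : Hom Xs' Y'} {fs : HomFam Obj Hom Xss Ys}
    {fs' : HomFam Obj Hom Xss' Ys'} (hf : HEq f f') (hfs : HEq fs fs') :
    HEq (HomFam.cons f fs) (HomFam.cons f' fs') := by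
  subst hXs hY hXss hYs hf hfs
  rfl

theorem appendFam_heq_appendFam {A A' C C' : List (List Obj)} {B B' D D' : List Obj}
    (hA : A = A') (hB : B = B') (hC : C = C') (hD : D = D')
    {fs : HomFam Obj Hom A B} {fs' : HomFam Obj Hom A' B'}
    {gs : HomFam Obj Hom C D} {gs' : HomFam Obj Hom C' D'}
    (hfs : HEq fs fs') (hgs : HEq gs gs') :
    HEq (appendFam fs gs) (appendFam fs' gs') := by
  subst hA hB hC hD hfs hgs
  rfl

theorem appendFam_nil_heq : ∀ {A B} (fs : HomFam Obj Hom A B), HEq (appendFam fs .nil) fs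
  | _, _, .nil => .rfl
  | _, _, .cons _ fs =>
      HomFam.cons_heq_cons rfl rfl (by simp) (by simp) .rfl (appendFam_nil_heq fs)

theorem appendFam_idFam_cons_ident (ident : ∀ X, Hom [X] X) :
    ∀ (Ws : List Obj) {X : Obj} {Xss Ys} (gs : HomFam Obj Hom Xss Ys),
      HEq (appendFam (idFam ident Ws) (.cons (ident X) gs))
        (appendFam (idFam ident (Ws ++ [X])) gs)
  | [], _, _, _, _ => .rfl
  | _ :: Ws, _, _, _, gs =>
      HomFam.cons_heq_cons rfl rfl (by simp) (by simp) .rfl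
        (appendFam_idFam_cons_ident ident Ws gs)

/-- Associativity instantiated at `((1_w)_{w ∈ Ws}, fs)` relates plugging `fs` into the
last argument in two stages with plugging it at once. -/
def idFamFamSnoc (ident : ∀ X, Hom [X] X) :
    ∀ (Ws : List Obj) {Xss Ys}, HomFam Obj Hom Xss Ys →
      FamFam Obj Hom ((Ws.map fun w => [[w]]) ++ [Xss]) ((Ws.map fun w => [w]) ++ [Ys])
  | [], _, _, fs => .cons fs .nil
  | w :: Ws, _, _, fs => .cons (.cons (ident w) .nil) (idFamFamSnoc ident Ws fs)

theorem flattenFam_idFamFamSnoc (ident : ∀ X, Hom [X] X) :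
    ∀ (Ws : List Obj) {Xss Ys} (fs : HomFam Obj Hom Xss Ys),
      HEq (flattenFam (idFamFamSnoc ident Ws fs)) (appendFam (idFam ident Ws) fs)
  | [], _, _, fs => appendFam_nil_heq fs
  | _ :: Ws, _, _, fs =>
      HomFam.cons_heq_cons rfl rfl (by simp [← List.flatMap_def, ← List.map_eq_flatMap])
        (by simp [← List.flatMap_def]) .rfl (flattenFam_idFamFamSnoc ident Ws fs)

namespace Multicategory

variable (M : Multicategory.{u, v})

theorem comp_heq_comp {Xss Xss' : List (List M.Obj)} {Ys Ys' : List M.Obj} {Z : M.Obj}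
    (hXss : Xss = Xss') (hYs : Ys = Ys') {fs : HomFam M.Obj M.Hom Xss Ys}
    {fs' : HomFam M.Obj M.Hom Xss' Ys'} {g : M.Hom Ys Z} {g' : M.Hom Ys' Z}
    (hfs : HEq fs fs') (hg : HEq g g') :
    HEq (M.comp fs g) (M.comp fs' g') := by
  subst hXss hYs hfs hg
  rfl

theorem zipComp_idFamFamSnoc :
    ∀ (Ws : List M.Obj) {Xss Ys} {Y : M.Obj} (fs : HomFam M.Obj M.Hom Xss Ys)
      (g : M.Hom Ys Y),
      HEq (zipComp (fun fs g => M.comp fs g) (idFamFamSnoc M.ident Ws fs)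
          (appendFam (idFam M.ident Ws) (.cons g .nil)))
        (appendFam (idFam M.ident Ws) (.cons (M.comp fs g) .nil))
  | [], _, _, _, _, _ => .rfl
  | w :: Ws, _, _, _, fs, g =>
      HomFam.cons_heq_cons rfl rfl (by simp) rfl (M.id_comp (M.ident w))
        (zipComp_idFamFamSnoc Ws fs g)

theorem plug_ident {Ys : List M.Obj} {Z : M.Obj} (f : M.Hom Ys Z) :
    M.plug (Xs := []) f (M.ident Z) = f :=
  eq_of_heq ((cast_heq _ _).trans (M.comp_id f))

/-- `ev` exhibits `H` as an internal hom object `C̲(Xs;Z)`. -/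
def IsEvaluation (Xs : List M.Obj) {H Z : M.Obj} (ev : M.Hom (Xs ++ [H]) Z) : Prop :=
  ∀ Ys : List M.Obj, Function.Bijective (fun f : M.Hom Ys H => M.plug f ev)

theorem isEvaluation_ident (Z : M.Obj) : M.IsEvaluation [] (M.ident Z) := by
  intro Ys
  convert Function.bijective_id
  exact M.plug_ident _

/-- The evaluation `(1,…,1,e) · e'` of `C̲(X; C̲(Ws;Z))`, read as `C̲(Ws,X;Z)`. -/
def snocEv {Ws : List M.Obj} {X H H' Z : M.Obj} (e : M.Hom ([X] ++ [H]) H')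
    (e' : M.Hom (Ws ++ [H']) Z) : M.Hom (Ws ++ [X] ++ [H]) Z :=
  cast (congrArg (M.Hom · Z) (List.append_assoc Ws [X] [H]).symm) (M.plug e e')

theorem plug_snocEv {Ws Ys : List M.Obj} {X H H' Z : M.Obj} (f : M.Hom Ys H)
    (e : M.Hom ([X] ++ [H]) H') (e' : M.Hom (Ws ++ [H']) Z) :
    HEq (M.plug f (M.snocEv e e')) (M.plug (M.plug (Xs := [X]) f e) e') := by
  have hassoc := M.assoc (idFamFamSnoc M.ident Ws (.cons (M.ident X) (.cons f .nil)))
    (appendFam (idFam M.ident Ws) (.cons e .nil)) e'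
  unfold plug
  refine (cast_heq _ _).trans (HEq.trans ?_ (cast_heq _ _).symm)
  refine HEq.trans (b := M.comp
      (flattenFam (idFamFamSnoc M.ident Ws (.cons (M.ident X) (.cons f .nil))))
      (M.comp (appendFam (idFam M.ident Ws) (.cons e .nil)) e')) ?_ ?_
  · refine M.comp_heq_comp ?_ (by simp [map_singleton_flatten]) ?_
      ((cast_heq _ _).trans (cast_heq _ _))
    · simp [← List.flatMap_def, ← List.map_eq_flatMap]
    exact (appendFam_idFam_cons_ident M.ident Ws _).symm.trans
      (flattenFam_idFamFamSnoc M.ident Ws _).symm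
  · refine hassoc.symm.trans (M.comp_heq_comp (by simp) rfl ?_ .rfl)
    refine (M.zipComp_idFamFamSnoc Ws _ e).trans ?_
    exact appendFam_heq_appendFam rfl rfl (by simp) rfl .rfl
      (HomFam.cons_heq_cons (by simp) rfl rfl rfl (cast_heq _ _).symm .rfl)

theorem IsEvaluation.snocEv {Ws : List M.Obj} {X H H' Z : M.Obj}
    {e : M.Hom ([X] ++ [H]) H'} {e' : M.Hom (Ws ++ [H']) Z} (he : M.IsEvaluation [X] e)
    (he' : M.IsEvaluation Ws e') : M.IsEvaluation (Ws ++ [X]) (M.snocEv e e') := by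
  intro Ys
  have hsrc : M.Hom (Ws ++ (X :: Ys)) Z = M.Hom (Ws ++ [X] ++ Ys) Z :=
    congrArg (M.Hom · Z) (List.append_assoc Ws [X] Ys).symm
  have hfactor : (fun f : M.Hom Ys H => M.plug f (M.snocEv e e')) =
      Equiv.cast hsrc ∘ (fun g : M.Hom (X :: Ys) H' => M.plug g e') ∘
        (fun f : M.Hom Ys H => M.plug (Xs := [X]) f e) := by
    funext f
    exact eq_of_heq ((M.plug_snocEv f e e').trans (cast_heq _ _).symm)
  rw [hfactor]
  exact ((Equiv.cast hsrc).bijective.comp (he' (X :: Ys))).comp (he Ys)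

end Multicategory

/-- If a multicategory has internal hom objects and evaluations
for single objects `X` (i.e. objects `C̲(X;Z)` and morphisms
`ev : X, C̲(X;Z) → Z` inducing bijections
`C(Y₁,…,Yₙ; C̲(X;Z)) ≅ C(X,Y₁,…,Yₙ; Z)`), then it is a closed multicategory :
internal homs and evaluations with the analogous universal property exist for
all finite sequences `X₁,…,Xₘ`. -/
theorem closed_of_unary_closed (M : Multicategory.{u, v})
    (h1 : ∀ X Z : M.Obj, ∃ (H : M.Obj) (ev : M.Hom ([X] ++ [H]) Z),
      ∀ Ys : List M.Obj,
        Function.Bijective (fun f : M.Hom Ys H => M.plug (Xs := [X]) f ev)) :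
    ∀ (Xs : List M.Obj) (Z : M.Obj),
      ∃ (H : M.Obj) (ev : M.Hom (Xs ++ [H]) Z),
        ∀ Ys : List M.Obj,
          Function.Bijective (fun f : M.Hom Ys H => M.plug (Xs := Xs) f ev) := by
  intro Xs
  induction Xs using List.reverseRecOn with
  | nil => exact fun Z => ⟨Z, M.ident Z, M.isEvaluation_ident Z⟩
  | append_singleton Ws X ih =>
    intro Z
    obtain ⟨H', e', he'⟩ := ih Z
    obtain ⟨H, e, he⟩ := h1 X H'
    exact ⟨H, M.snocEv e e', Multicategory.IsEvaluation.snocEv M he he'⟩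
end
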